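/- The number of standard Young tableaux of shape λ (a partition of n ≥ 2) with a descent at position 1 equals N · c_{λ'}, where N is the total number of standard Young tableaux of shape λ and c_{λ'} = Σ_{i≥j} λ'ᵢ(λ'ⱼ−1)/(n(n−1)). -/

import Mathlib

open Finset

/-- A standard Young tableau of shape `μ`: a bijective filling of the cells of `μ`
with the numbers `1, ..., μ.card`, strictly increasing along rows and columns. -/
structure SYT (μ : YoungDiagram) where
  entry : ℕ → ℕ → ℕ
  row_strict : ∀ ⦃i j1 j2 : ℕ⦄, j1 < j2 → (i, j2) ∈ μ → entry i j1 < entry i j2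
  col_strict : ∀ ⦃i1 i2 j : ℕ⦄, i1 < i2 → (i2, j) ∈ μ → entry i1 j < entry i2 j
  zeros : ∀ ⦃i j : ℕ⦄, (i, j) ∉ μ → entry i j = 0
  bijOn : Set.BijOn (fun c : ℕ × ℕ => entry c.1 c.2) (μ.cells : Set (ℕ × ℕ))
    (Set.Icc 1 μ.card)

/-- `T` has a descent at `i` iff the entry `i+1` lies in a strictly lower row than `i`. -/
def SYT.DescentAt {μ : YoungDiagram} (T : SYT μ) (i : ℕ) : Prop :=
  ∀ c d : ℕ × ℕ, c ∈ μ → d ∈ μ →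
    T.entry c.1 c.2 = i → T.entry d.1 d.2 = i + 1 → c.1 < d.1

/-!
Write `d k` for the number of tableaux in which `k + 1` lies strictly below `k`, and let the
content of a cell `(i, j)` be `j - i`. Swapping the entries `k` and `k + 1` whenever they share
neither a row nor a column is an involution on tableaux; it reverses the sign of
`content (k + 1) - content k - ε`, where `ε = -1` at a descent and `1` otherwise, and on the
tableaux it fixes that quantity vanishes. Hence the total content of the cell of `k + 1`, summed
over all `N` tableaux, exceeds that of `k` by `N - 2 d k`. A swap at `k` or at `k + 1`, chosen
according to the rows of `k`, `k + 1`, `k + 2`, matches descents at `k` with descents at `k + 1`,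
so `d k = d 1`, and the total content of the cell of `k + 1` is `k (N - 2 d 1)`. Summing over `k`
and comparing with `N · ∑_{c ∈ λ} content c`, computed column by column, gives
`n (n - 1) d 1 = N ∑_{i ≥ j} λ'ᵢ (λ'ⱼ - 1)`.
-/

theorem sum_range_intCast_mul_two (m : ℕ) : (∑ i ∈ range m, (i : ℤ)) * 2 = m * (m - 1) := by
  have := congrArg (Nat.cast : ℕ → ℤ) (sum_range_id_mul_two m)
  rcases m with _ | m
  · simp
  · push_cast at this
    simpa using this

theorem two_mul_sum_sum_mul_sub_one (x : ℕ → ℤ) (m : ℕ) :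
    2 * ∑ i ∈ range m, ∑ j ∈ range (i + 1), x i * (x j - 1) =
      (∑ i ∈ range m, x i) * (∑ i ∈ range m, x i - 1) -
        ∑ j ∈ range m, (2 * j * x j - x j * (x j - 1)) := by
  induction m with
  | zero => simp
  | succ m ih =>
    rw [sum_range_succ, sum_range_succ x, sum_range_succ (fun j => 2 * (j : ℤ) * x j - _), mul_add,
      ih, ← mul_sum, sum_range_succ]
    simp only [sum_sub_distrib, sum_const, card_range, nsmul_eq_mul, mul_one]
    ring

namespace YoungDiagram

def content (c : ℕ × ℕ) : ℤ := c.2 - c.1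

variable (μ : YoungDiagram)

theorem snd_lt_card {c : ℕ × ℕ} (hc : c ∈ μ) : c.2 < μ.card :=
  calc c.2 < μ.rowLen c.1 := μ.mem_iff_lt_rowLen.1 hc
    _ = #(μ.row c.1) := μ.rowLen_eq_card
    _ ≤ μ.card := card_le_card (filter_subset _ _)

theorem sum_cells_eq_sum_colLen {M : Type*} [AddCommMonoid M] (g : ℕ × ℕ → M) :
    ∑ c ∈ μ.cells, g c = ∑ j ∈ range μ.card, ∑ i ∈ range (μ.colLen j), g (i, j) := by
  rw [← sum_fiberwise_of_maps_to (g := Prod.snd) (t := range μ.card)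
    fun c hc => mem_range.2 (μ.snd_lt_card ((mem_cells c).1 hc))]
  refine sum_congr rfl fun j _ => ?_
  rw [show {c ∈ μ.cells | c.2 = j} = μ.col j from rfl, col_eq_prod, sum_product]
  simp only [sum_singleton]

theorem sum_colLen : ∑ j ∈ range μ.card, (μ.colLen j : ℤ) = μ.card := by
  simpa using (μ.sum_cells_eq_sum_colLen fun _ => (1 : ℤ)).symm

theorem two_mul_sum_content :
    2 * ∑ c ∈ μ.cells, content c = μ.card * (μ.card - 1 : ℤ) -
      2 * ∑ i ∈ range μ.card, ∑ j ∈ range (i + 1), (μ.colLen i : ℤ) * (μ.colLen j - 1) := by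
  have hcol (j : ℕ) : 2 * ∑ i ∈ range (μ.colLen j), content (i, j) =
      2 * j * μ.colLen j - μ.colLen j * (μ.colLen j - 1 : ℤ) := by
    simp only [content, sum_sub_distrib, sum_const, card_range, nsmul_eq_mul]
    linear_combination -sum_range_intCast_mul_two (μ.colLen j)
  rw [two_mul_sum_sum_mul_sub_one, μ.sum_colLen, μ.sum_cells_eq_sum_colLen, mul_sum,
    sum_congr rfl fun j _ => hcol j]
  ring

end YoungDiagram

namespace SYT

open YoungDiagram (content)

variable {μ : YoungDiagram}

@[ext]
theorem ext {T S : SYT μ} (h : T.entry = S.entry) : T = S := by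
  cases T; cases S; cases h; rfl

instance : Finite (SYT μ) := by
  refine Finite.of_injective (fun T (c : (μ.cells : Set (ℕ × ℕ))) =>
    (⟨T.entry c.1.1 c.1.2, T.bijOn.mapsTo c.2⟩ : Set.Icc 1 μ.card)) fun T S h => SYT.ext ?_
  funext i j
  by_cases hij : (i, j) ∈ μ
  · exact congrArg Subtype.val (congrFun h ⟨(i, j), by simpa using hij⟩)
  · rw [T.zeros hij, S.zeros hij]

noncomputable instance : Fintype (SYT μ) := Fintype.ofFinite _

theorem entry_mem_Icc (T : SYT μ) {c : ℕ × ℕ} (hc : c ∈ μ) :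
    T.entry c.1 c.2 ∈ Set.Icc 1 μ.card :=
  T.bijOn.mapsTo (by simpa using hc)

theorem entry_lt_entry (T : SYT μ) {p q : ℕ × ℕ} (hq : q ∈ μ) (hpq : p < q) :
    T.entry p.1 p.2 < T.entry q.1 q.2 := by
  have hm : (p.1, q.2) ∈ μ := μ.up_left_mem (Prod.le_def.1 hpq.le).1 le_rfl hq
  rcases Prod.lt_iff.1 hpq with ⟨h1, h2⟩ | ⟨h1, h2⟩
  · calc T.entry p.1 p.2 ≤ T.entry p.1 q.2 := by
          rcases h2.eq_or_lt with h2 | h2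
          · rw [h2]
          · exact (T.row_strict h2 hm).le
      _ < T.entry q.1 q.2 := T.col_strict h1 hq
  · calc T.entry p.1 p.2 < T.entry p.1 q.2 := T.row_strict h2 hm
      _ ≤ T.entry q.1 q.2 := by
          rcases h1.eq_or_lt with h1 | h1
          · rw [h1]
          · exact (T.col_strict h1 hq).le

/-- Only meaningful for `1 ≤ k ≤ μ.card`. -/
noncomputable def cell (T : SYT μ) (k : ℕ) : ℕ × ℕ :=
  Function.invFunOn (fun c : ℕ × ℕ => T.entry c.1 c.2) μ.cells k

section cell

variable (T : SYT μ) {k : ℕ}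

theorem cell_entry {c : ℕ × ℕ} (hc : c ∈ μ) : T.cell (T.entry c.1 c.2) = c :=
  T.bijOn.invOn_invFunOn.1 (by simpa using hc)

theorem cell_eq_of_entry_eq {c : ℕ × ℕ} (hc : c ∈ μ) (h : T.entry c.1 c.2 = k) : T.cell k = c :=
  h ▸ T.cell_entry hc

theorem cell_mem (hk : 1 ≤ k) (hkn : k ≤ μ.card) : T.cell k ∈ μ := by
  simpa [cell] using T.bijOn.surjOn.mapsTo_invFunOn (Set.mem_Icc.2 ⟨hk, hkn⟩)

theorem entry_cell (hk : 1 ≤ k) (hkn : k ≤ μ.card) : T.entry (T.cell k).1 (T.cell k).2 = k :=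
  T.bijOn.invOn_invFunOn.2 (Set.mem_Icc.2 ⟨hk, hkn⟩)

theorem cell_one (hn : 1 ≤ μ.card) : T.cell 1 = (0, 0) := by
  have h1 := T.cell_mem le_rfl hn
  by_contra hne
  have hlt := T.entry_lt_entry h1 (lt_of_le_of_ne (Prod.mk_le_mk.2 ⟨Nat.zero_le _, Nat.zero_le _⟩)
    (Ne.symm hne))
  rw [T.entry_cell le_rfl hn] at hlt
  have hpos := (T.entry_mem_Icc (μ.up_left_mem (Nat.zero_le _) (Nat.zero_le _) h1)).1
  exact absurd hlt hpos.not_gt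

theorem descentAt_iff (hk : 1 ≤ k) (hkn : k + 1 ≤ μ.card) :
    T.DescentAt k ↔ (T.cell k).1 < (T.cell (k + 1)).1 := by
  refine ⟨fun h => h _ _ (T.cell_mem hk (by omega)) (T.cell_mem (by omega) hkn)
    (T.entry_cell hk (by omega)) (T.entry_cell (by omega) hkn), ?_⟩
  intro h c d hc hd hck hdk
  rwa [← T.cell_eq_of_entry_eq hc hck, ← T.cell_eq_of_entry_eq hd hdk]

end cell

section adjacent

variable (T : SYT μ) {k : ℕ}

theorem entry_le_entry {p q : ℕ × ℕ} (hq : q ∈ μ) (hpq : p ≤ q) :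
    T.entry p.1 p.2 ≤ T.entry q.1 q.2 :=
  hpq.eq_or_lt.elim (fun h => h ▸ le_rfl) fun h => (T.entry_lt_entry hq h).le

theorem eq_of_entry_eq_succ_of_fst_eq {p q : ℕ × ℕ} (hp : p ∈ μ) (hq : q ∈ μ)
    (he : T.entry q.1 q.2 = T.entry p.1 p.2 + 1) (h : p.1 = q.1) : q = (p.1, p.2 + 1) := by
  have hlt : p.2 < q.2 := by
    by_contra hle
    have := T.entry_le_entry hp (Prod.le_def.2 ⟨h.ge, not_lt.1 hle⟩)
    omega
  have hadj : q.2 = p.2 + 1 := by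
    by_contra hne
    have hm : (p.1, p.2 + 1) ∈ μ := μ.up_left_mem h.le (by omega) hq
    have h1 := T.entry_lt_entry hm (show p < (p.1, p.2 + 1) from
      Prod.lt_of_le_of_lt le_rfl (lt_add_one _))
    have h2 := T.entry_lt_entry hq (show (p.1, p.2 + 1) < q from
      Prod.lt_of_le_of_lt h.le (by dsimp only; omega))
    omega
  exact Prod.ext h.symm hadj

theorem eq_of_entry_eq_succ_of_snd_eq {p q : ℕ × ℕ} (hp : p ∈ μ) (hq : q ∈ μ)
    (he : T.entry q.1 q.2 = T.entry p.1 p.2 + 1) (h : p.2 = q.2) : q = (p.1 + 1, p.2) := by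
  have hlt : p.1 < q.1 := by
    by_contra hle
    have := T.entry_le_entry hp (Prod.le_def.2 ⟨not_lt.1 hle, h.ge⟩)
    omega
  have hadj : q.1 = p.1 + 1 := by
    by_contra hne
    have hm : (p.1 + 1, p.2) ∈ μ := μ.up_left_mem (by omega) h.le hq
    have h1 := T.entry_lt_entry hm (show p < (p.1 + 1, p.2) from
      Prod.lt_of_lt_of_le (lt_add_one _) le_rfl)
    have h2 := T.entry_lt_entry hq (show (p.1 + 1, p.2) < q from
      Prod.lt_of_lt_of_le (by dsimp only; omega) h.le)
    omega
  exact Prod.ext hadj h.symm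

theorem cell_succ_of_fst_eq (hk : 1 ≤ k) (hkn : k + 1 ≤ μ.card)
    (h : (T.cell k).1 = (T.cell (k + 1)).1) :
    T.cell (k + 1) = ((T.cell k).1, (T.cell k).2 + 1) :=
  T.eq_of_entry_eq_succ_of_fst_eq (T.cell_mem hk (by omega)) (T.cell_mem (by omega) hkn)
    (by rw [T.entry_cell hk (by omega), T.entry_cell (by omega) hkn]) h

theorem cell_succ_of_snd_eq (hk : 1 ≤ k) (hkn : k + 1 ≤ μ.card)
    (h : (T.cell k).2 = (T.cell (k + 1)).2) :
    T.cell (k + 1) = ((T.cell k).1 + 1, (T.cell k).2) :=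
  T.eq_of_entry_eq_succ_of_snd_eq (T.cell_mem hk (by omega)) (T.cell_mem (by omega) hkn)
    (by rw [T.entry_cell hk (by omega), T.entry_cell (by omega) hkn]) h

theorem entry_ne_entry_add_two {p : ℕ × ℕ} (hq : (p.1 + 1, p.2 + 1) ∈ μ) :
    T.entry (p.1 + 1) (p.2 + 1) ≠ T.entry p.1 p.2 + 2 := by
  intro he
  -- both cells strictly between `p` and `p + (1, 1)` would have to carry the entry in between
  have between : ∀ m : ℕ × ℕ, p < m → m < (p.1 + 1, p.2 + 1) →
      m ∈ μ ∧ T.entry m.1 m.2 = T.entry p.1 p.2 + 1 := by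
    intro m h1 h2
    have hm : m ∈ μ := μ.up_left_mem (Prod.le_def.1 h2.le).1 (Prod.le_def.1 h2.le).2 hq
    have h1 := T.entry_lt_entry hm h1
    have h2 : T.entry m.1 m.2 < T.entry (p.1 + 1) (p.2 + 1) := T.entry_lt_entry hq h2
    exact ⟨hm, by omega⟩
  obtain ⟨hr, her⟩ := between (p.1, p.2 + 1) (Prod.lt_of_le_of_lt le_rfl (lt_add_one _))
    (Prod.lt_of_lt_of_le (lt_add_one _) le_rfl)
  obtain ⟨hd, hed⟩ := between (p.1 + 1, p.2) (Prod.lt_of_lt_of_le (lt_add_one _) le_rfl)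
    (Prod.lt_of_le_of_lt le_rfl (lt_add_one _))
  have := T.bijOn.injOn (by simpa using hr) (by simpa using hd) (her.trans hed.symm)
  simp at this

theorem cell_add_two_ne (hk : 1 ≤ k) (hkn : k + 2 ≤ μ.card) :
    T.cell (k + 2) ≠ ((T.cell k).1 + 1, (T.cell k).2 + 1) := by
  intro h
  have hq := T.cell_mem (k := k + 2) (by omega) hkn
  have he := T.entry_cell (k := k + 2) (by omega) hkn
  rw [h] at hq he
  exact T.entry_ne_entry_add_two hq (by rw [he, T.entry_cell hk (by omega)])

end adjacent

structure Admissible (T : SYT μ) (k : ℕ) : Prop where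
  one_le : 1 ≤ k
  succ_le_card : k + 1 ≤ μ.card
  fst_ne : (T.cell k).1 ≠ (T.cell (k + 1)).1
  snd_ne : (T.cell k).2 ≠ (T.cell (k + 1)).2

theorem Admissible.swap_entry_lt {T : SYT μ} {k : ℕ} (h : T.Admissible k) {p q : ℕ × ℕ}
    (hq : q ∈ μ) (hpq : p < q) (hline : p.1 = q.1 ∨ p.2 = q.2) :
    Equiv.swap k (k + 1) (T.entry p.1 p.2) < Equiv.swap k (k + 1) (T.entry q.1 q.2) := by
  have hp : p ∈ μ := μ.up_left_mem (Prod.le_def.1 hpq.le).1 (Prod.le_def.1 hpq.le).2 hq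
  have hlt := T.entry_lt_entry hq hpq
  have hnot : ¬(T.entry p.1 p.2 = k ∧ T.entry q.1 q.2 = k + 1) := by
    rintro ⟨hpk, hqk⟩
    rw [← T.cell_eq_of_entry_eq hp hpk, ← T.cell_eq_of_entry_eq hq hqk] at hline
    exact hline.elim h.fst_ne h.snd_ne
  rw [Equiv.swap_apply_def, Equiv.swap_apply_def]
  split_ifs <;> omega

open scoped Classical in
noncomputable def swapAt (T : SYT μ) (k : ℕ) : SYT μ :=
  if h : T.Admissible k then
    { entry := fun i j => Equiv.swap k (k + 1) (T.entry i j)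
      row_strict := fun _ _ _ hj hq =>
        h.swap_entry_lt hq (Prod.mk_lt_mk_iff_right.2 hj) (Or.inl rfl)
      col_strict := fun _ _ _ hi hq =>
        h.swap_entry_lt hq (Prod.mk_lt_mk_iff_left.2 hi) (Or.inr rfl)
      zeros := fun _ _ hij => by
        have := h.one_le
        rw [T.zeros hij, Equiv.swap_apply_of_ne_of_ne] <;> omega
      bijOn := by
        have := h.one_le
        have := h.succ_le_card
        exact (Equiv.swap_bijOn_self (by simp; omega)).comp T.bijOn }
  else T

section swapAt

variable {T : SYT μ} {k : ℕ}

theorem swapAt_of_not_admissible (h : ¬T.Admissible k) : T.swapAt k = T := by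
  rw [swapAt, dif_neg h]

theorem entry_swapAt (h : T.Admissible k) (i j : ℕ) :
    (T.swapAt k).entry i j = Equiv.swap k (k + 1) (T.entry i j) := by
  rw [swapAt, dif_pos h]

theorem cell_swapAt (h : T.Admissible k) {v : ℕ} (hv : 1 ≤ v) (hvn : v ≤ μ.card) :
    (T.swapAt k).cell v = T.cell (Equiv.swap k (k + 1) v) := by
  have := h.one_le
  have := h.succ_le_card
  have hσ : 1 ≤ Equiv.swap k (k + 1) v ∧ Equiv.swap k (k + 1) v ≤ μ.card := by
    rw [Equiv.swap_apply_def]; split_ifs <;> omega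
  refine (T.swapAt k).cell_eq_of_entry_eq (T.cell_mem hσ.1 hσ.2) ?_
  rw [entry_swapAt h, T.entry_cell hσ.1 hσ.2, Equiv.swap_apply_self]

theorem cell_swapAt_left (h : T.Admissible k) : (T.swapAt k).cell k = T.cell (k + 1) := by
  rw [cell_swapAt h h.one_le (by have := h.succ_le_card; omega), Equiv.swap_apply_left]

theorem cell_swapAt_right (h : T.Admissible k) : (T.swapAt k).cell (k + 1) = T.cell k := by
  rw [cell_swapAt h (by omega) h.succ_le_card, Equiv.swap_apply_right]

theorem Admissible.swapAt (h : T.Admissible k) : (T.swapAt k).Admissible k :=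
  ⟨h.one_le, h.succ_le_card, by rw [cell_swapAt_left h, cell_swapAt_right h]; exact h.fst_ne.symm,
    by rw [cell_swapAt_left h, cell_swapAt_right h]; exact h.snd_ne.symm⟩

theorem swapAt_swapAt (T : SYT μ) (k : ℕ) : (T.swapAt k).swapAt k = T := by
  by_cases h : T.Admissible k
  · ext i j
    rw [entry_swapAt h.swapAt, entry_swapAt h, Equiv.swap_apply_self]
  · rw [swapAt_of_not_admissible h, swapAt_of_not_admissible h]

theorem swapAt_ne (h : T.Admissible k) : T.swapAt k ≠ T := fun he =>
  h.fst_ne (by rw [← cell_swapAt_right h, he])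

end swapAt

noncomputable def descents (μ : YoungDiagram) (k : ℕ) : Finset (SYT μ) :=
  {T | (T.cell k).1 < (T.cell (k + 1)).1}

@[simp]
theorem mem_descents {T : SYT μ} {k : ℕ} :
    T ∈ descents μ k ↔ (T.cell k).1 < (T.cell (k + 1)).1 := by
  simp [descents]

theorem content_cell_succ_of_not_admissible {T : SYT μ} {k : ℕ} (hk : 1 ≤ k)
    (hkn : k + 1 ≤ μ.card) (h : ¬T.Admissible k) :
    content (T.cell (k + 1)) =
      content (T.cell k) + if (T.cell k).1 < (T.cell (k + 1)).1 then -1 else 1 := by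
  have hline : (T.cell k).1 = (T.cell (k + 1)).1 ∨ (T.cell k).2 = (T.cell (k + 1)).2 := by
    by_contra! hne
    exact h ⟨hk, hkn, hne.1, hne.2⟩
  rcases hline with hrow | hcol
  · rw [T.cell_succ_of_fst_eq hk hkn hrow, if_neg (by simp), content, content]
    push_cast; ring
  · rw [T.cell_succ_of_snd_eq hk hkn hcol, if_pos (by simp), content, content]
    push_cast; ring

theorem sum_ite_descents (k : ℕ) :
    ∑ T : SYT μ, (if (T.cell k).1 < (T.cell (k + 1)).1 then -1 else 1 : ℤ) =
      Fintype.card (SYT μ) - 2 * #(descents μ k) := by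
  have hsplit := card_filter_add_card_filter_not (s := univ)
    (fun T : SYT μ => (T.cell k).1 < (T.cell (k + 1)).1)
  rw [sum_ite, sum_const, sum_const, ← card_univ, ← hsplit, descents]
  simp only [smul_neg, nsmul_eq_mul, mul_one, Nat.cast_add]
  ring

theorem sum_content_cell_succ {k : ℕ} (hk : 1 ≤ k) (hkn : k + 1 ≤ μ.card) :
    ∑ T : SYT μ, content (T.cell (k + 1)) =
      ∑ T : SYT μ, content (T.cell k) + Fintype.card (SYT μ) - 2 * #(descents μ k) := by
  set f : SYT μ → ℤ := fun T => content (T.cell (k + 1)) - content (T.cell k) -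
    if (T.cell k).1 < (T.cell (k + 1)).1 then -1 else 1
  have hfix : ∀ T : SYT μ, ¬T.Admissible k → f T = 0 := fun T h => by
    simp only [f, content_cell_succ_of_not_admissible hk hkn h]; ring
  have hf : ∑ T, f T = 0 := by
    refine sum_ninvolution (swapAt · k) (fun T => ?_) (fun T hT => ?_) (fun _ => mem_univ _)
      (swapAt_swapAt · k)
    · by_cases h : T.Admissible k
      · have := h.fst_ne
        simp only [f, cell_swapAt_left h, cell_swapAt_right h]
        split_ifs <;> omega
      · rw [swapAt_of_not_admissible h, hfix T h, add_zero]
    · exact swapAt_ne (by_contra fun h => hT (hfix T h))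
  simp only [f, sum_sub_distrib, sum_ite_descents] at hf
  linarith

section exchange

variable {T : SYT μ} {k : ℕ}

theorem admissible_of_not_iff (hk : 1 ≤ k) (hkn : k + 2 ≤ μ.card)
    (hT : ¬((T.cell k).1 < (T.cell (k + 1)).1 ↔ (T.cell (k + 1)).1 < (T.cell (k + 2)).1))
    (hc : (T.cell k).1 < (T.cell (k + 1)).1 ↔ (T.cell k).1 < (T.cell (k + 2)).1) :
    T.Admissible k := by
  refine ⟨hk, by omega, by omega, fun hcol => ?_⟩
  have h1 := T.cell_succ_of_snd_eq hk (by omega) hcol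
  have hrow : (T.cell (k + 1)).1 = (T.cell (k + 2)).1 := by rw [h1] at hT hc ⊢; omega
  have h2 := T.cell_succ_of_fst_eq (k := k + 1) (by omega) hkn hrow
  exact T.cell_add_two_ne hk hkn (by rw [h2, h1])

theorem admissible_succ_of_not_iff (hk : 1 ≤ k) (hkn : k + 2 ≤ μ.card)
    (hc : ¬((T.cell k).1 < (T.cell (k + 1)).1 ↔ (T.cell k).1 < (T.cell (k + 2)).1)) :
    T.Admissible (k + 1) := by
  refine ⟨by omega, hkn, fun hrow => hc (by rw [hrow]), fun hcol => ?_⟩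
  have h2 := T.cell_succ_of_snd_eq (k := k + 1) (by omega) hkn hcol
  have hrow : (T.cell k).1 = (T.cell (k + 1)).1 := by rw [h2] at hc; omega
  have h1 := T.cell_succ_of_fst_eq hk (by omega) hrow
  exact T.cell_add_two_ne hk hkn (by rw [h2, h1])

/-- Swaps `k, k + 1` or `k + 1, k + 2`, chosen so that a tableau with a descent at exactly one
of `k`, `k + 1` is sent to one with a descent at the other. -/
noncomputable def exchange (T : SYT μ) (k : ℕ) : SYT μ :=
  if (T.cell k).1 < (T.cell (k + 1)).1 ↔ (T.cell k).1 < (T.cell (k + 2)).1 then T.swapAt k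
  else T.swapAt (k + 1)

theorem exchange_spec (hk : 1 ≤ k) (hkn : k + 2 ≤ μ.card)
    (hT : ¬((T.cell k).1 < (T.cell (k + 1)).1 ↔ (T.cell (k + 1)).1 < (T.cell (k + 2)).1)) :
    (((T.exchange k).cell k).1 < ((T.exchange k).cell (k + 1)).1 ↔
        ¬(T.cell k).1 < (T.cell (k + 1)).1) ∧
      (((T.exchange k).cell (k + 1)).1 < ((T.exchange k).cell (k + 2)).1 ↔
        ¬(T.cell (k + 1)).1 < (T.cell (k + 2)).1) ∧
      (T.exchange k).exchange k = T := by
  by_cases hc : (T.cell k).1 < (T.cell (k + 1)).1 ↔ (T.cell k).1 < (T.cell (k + 2)).1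
  · have h := admissible_of_not_iff hk hkn hT hc
    have e2 : (T.swapAt k).cell (k + 2) = T.cell (k + 2) := by
      rw [cell_swapAt h (by omega) hkn, Equiv.swap_apply_of_ne_of_ne (by omega) (by omega)]
    simp only [exchange, if_pos hc, cell_swapAt_left h, cell_swapAt_right h, e2]
    refine ⟨by omega, by omega, ?_⟩
    rw [if_pos (by omega), swapAt_swapAt]
  · have h := admissible_succ_of_not_iff hk hkn hc
    have e0 : (T.swapAt (k + 1)).cell k = T.cell k := by
      rw [cell_swapAt h hk (by omega), Equiv.swap_apply_of_ne_of_ne (by omega) (by omega)]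
    simp only [exchange, if_neg hc, e0, cell_swapAt_left h, cell_swapAt_right h, add_assoc,
      Nat.reduceAdd]
    refine ⟨by omega, by omega, ?_⟩
    rw [if_neg (by omega), swapAt_swapAt]

theorem card_descents_succ (hk : 1 ≤ k) (hkn : k + 2 ≤ μ.card) :
    #(descents μ (k + 1)) = #(descents μ k) := by
  classical
  have hUV : #(descents μ k \ descents μ (k + 1)) = #(descents μ (k + 1) \ descents μ k) := by
    refine card_nbij' (exchange · k) (exchange · k) (fun T hT => ?_) (fun T hT => ?_)
      (fun T hT => ?_) (fun T hT => ?_)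
    all_goals
      simp only [coe_sdiff, Set.mem_sdiff, mem_coe, mem_descents, add_assoc, Nat.reduceAdd] at hT ⊢
      have := exchange_spec hk hkn (T := T) (by omega)
    · omega
    · omega
    · exact this.2.2
    · exact this.2.2
  rw [← card_sdiff_add_card_inter (descents μ k), ← card_sdiff_add_card_inter (descents μ (k + 1)),
    inter_comm, hUV]

theorem card_descents_eq_card_descents_one (hk : 1 ≤ k) (hkn : k + 1 ≤ μ.card) :
    #(descents μ k) = #(descents μ 1) := by
  induction k, hk using Nat.le_induction with
  | base => rfl
  | succ k hk ih => rw [card_descents_succ hk hkn, ih (by omega)]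

end exchange

theorem sum_content_cell_succ_eq_mul {k : ℕ} (hkn : k < μ.card) :
    ∑ T : SYT μ, content (T.cell (k + 1)) =
      k * ((Fintype.card (SYT μ) : ℤ) - 2 * #(descents μ 1)) := by
  induction k with
  | zero => simp [cell_one _ (by omega : 1 ≤ μ.card), content]
  | succ k ih =>
    rw [sum_content_cell_succ (by omega) (by omega), ih (by omega),
      card_descents_eq_card_descents_one (k := k + 1) (by omega) (by omega)]
    push_cast
    ring

theorem sum_range_content_cell (T : SYT μ) :
    ∑ k ∈ range μ.card, content (T.cell (k + 1)) = ∑ c ∈ μ.cells, content c := by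
  refine sum_nbij' (fun k => T.cell (k + 1)) (fun c => T.entry c.1 c.2 - 1) (fun k hk => ?_)
    (fun c hc => ?_) (fun k hk => ?_) (fun c hc => ?_) fun _ _ => rfl
  · simpa using T.cell_mem (by omega) (mem_range.1 hk)
  · have := T.entry_mem_Icc (by simpa using hc)
    simp only [Set.mem_Icc] at this
    simp only [mem_range]
    omega
  · simp [T.entry_cell (by omega) (mem_range.1 hk)]
  · have := (T.entry_mem_Icc (by simpa using hc)).1
    simp only [Nat.sub_add_cancel this, T.cell_entry (by simpa using hc : c ∈ μ)]

theorem card_descents_one_mul :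
    (#(descents μ 1) : ℤ) * (μ.card * (μ.card - 1)) =
      Fintype.card (SYT μ) *
        ∑ i ∈ range μ.card, ∑ j ∈ range (i + 1), (μ.colLen i : ℤ) * (μ.colLen j - 1) := by
  have hk : ∑ k ∈ range μ.card, ∑ T : SYT μ, content (T.cell (k + 1)) =
      (∑ k ∈ range μ.card, (k : ℤ)) * (Fintype.card (SYT μ) - 2 * #(descents μ 1)) := by
    rw [sum_mul]
    exact sum_congr rfl fun k hk => sum_content_cell_succ_eq_mul (mem_range.1 hk)
  have hT : ∑ k ∈ range μ.card, ∑ T : SYT μ, content (T.cell (k + 1)) =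
      Fintype.card (SYT μ) * ∑ c ∈ μ.cells, content c := by
    rw [sum_comm, sum_congr rfl fun T _ => sum_range_content_cell T, sum_const, card_univ,
      nsmul_eq_mul]
  refine mul_left_cancel₀ two_ne_zero ?_
  linear_combination 2 * hk - 2 * hT +
    ((Fintype.card (SYT μ) : ℤ) - 2 * #(descents μ 1)) * sum_range_intCast_mul_two μ.card -
    (Fintype.card (SYT μ) : ℤ) * μ.two_mul_sum_content

theorem card_descentAt {k : ℕ} (hk : 1 ≤ k) (hkn : k + 1 ≤ μ.card) :
    Nat.card {T : SYT μ // T.DescentAt k} = #(descents μ k) := by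
  classical
  rw [Nat.card_eq_fintype_card, Fintype.card_subtype]
  congr 1
  ext T
  simp [descentAt_iff T hk hkn]

end SYT

/-- The number of standard Young tableaux of shape `μ` with a descent at position `1`
equals `N · c_{λ'}` where `N` is the total number of SYT of shape `μ` and
`c_{λ'} = Σ_{i≥j} λ'ᵢ(λ'ⱼ−1)/(n(n−1))` (with `λ'ᵢ = μ.colLen i`, `n = μ.card`). -/
theorem descent_at_one_count (μ : YoungDiagram) (n : ℕ) (hn : μ.card = n) (h2 : 2 ≤ n) :
    (Nat.card {T : SYT μ // T.DescentAt 1} : ℝ) =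
      (Nat.card (SYT μ) : ℝ) *
        ∑ i ∈ Finset.range n, ∑ j ∈ Finset.range (i + 1),
          (μ.colLen i : ℝ) * ((μ.colLen j : ℝ) - 1) / (n * ((n : ℝ) - 1)) := by
  subst hn
  have hn : (2 : ℝ) ≤ μ.card := by exact_mod_cast h2
  have hden : (μ.card : ℝ) * (μ.card - 1) ≠ 0 := mul_ne_zero (by linarith) (by linarith)
  simp only [← sum_div]
  rw [SYT.card_descentAt le_rfl h2, Nat.card_eq_fintype_card, mul_div_assoc', eq_div_iff hden]
  exact_mod_cast SYT.card_descents_one_mul
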